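/- The coordinates of the invariant fluid solution are determined by its norm via z_i* = λ E[min{‖z*‖_1 B_1^i, D}] − λ E[min{‖z*‖_1 B_1^{i-1}, D}] for each i = 1,...,I, where B_1^j = B_1 + ... + B_j with B_l ~ Exp(μ_l) independent of D ~ Exp(ν). -/

import Mathlib

/-!
Write `c = ‖z*‖₁`. The invariant equations are a first-order recursion,
`z₁ (μ₁ + νc) = λc` and `zᵢ (μᵢ + νc) = μᵢ₋₁ zᵢ₋₁`, so `zᵢ = λc/(μᵢ + νc) · ∏_{l<i} μₗ/(μₗ + νc)`.
On the probabilistic side, for `A ≥ 0` independent of `D ~ Exp(ν)` the layer-cake formula gives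
`E[min(A, D)] = ∫₀^∞ P(A > t) e^{-νt} dt = E[∫₀^A e^{-νt} dt] = (1 - E[e^{-νA}]) / ν`, and for
`A = c B_1^k` the Laplace transform factorises as `∏_{l≤k} μₗ/(μₗ + νc)`. Two consecutive such
expressions differ by exactly the product formula for `zᵢ`.
-/

open MeasureTheory ProbabilityTheory Set Real
open scoped ENNReal

lemma integral_zero_to_exp_neg_mul {ν : ℝ} (hν : ν ≠ 0) (a : ℝ) :
    ∫ t in 0..a, exp (-(ν * t)) = (1 - exp (-(ν * a))) / ν := by
  simp only [← neg_mul]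
  rw [intervalIntegral.integral_comp_mul_left (fun t => exp t) (neg_ne_zero.mpr hν), integral_exp]
  simp only [mul_zero, exp_zero, smul_eq_mul]
  field_simp
  ring

namespace ProbabilityTheory

lemma ae_nonneg_expMeasure (r : ℝ) : ∀ᵐ x ∂expMeasure r, 0 ≤ x := by
  rw [expMeasure, gammaMeasure, ae_withDensity_iff
    (show Measurable (gammaPDF 1 r) from (measurable_gammaPDFReal 1 r).ennreal_ofReal)]
  refine ae_of_all _ fun x hx => ?_
  by_contra! h
  exact hx (gammaPDF_of_neg h)

lemma ae_nonneg_of_map_eq_expMeasure {Ω : Type*} [MeasurableSpace Ω] {P : Measure Ω} {X : Ω → ℝ}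
    {r : ℝ} (hX : Measurable X) (hlaw : P.map X = expMeasure r) : 0 ≤ᵐ[P] X :=
  (ae_map_iff hX.aemeasurable measurableSet_Ici).mp (hlaw ▸ ae_nonneg_expMeasure r)

lemma expMeasure_Ioi {r t : ℝ} (hr : 0 < r) (ht : 0 ≤ t) :
    expMeasure r (Ioi t) = ENNReal.ofReal (exp (-(r * t))) := by
  have := isProbabilityMeasure_expMeasure hr
  have hle : exp (-(r * t)) ≤ 1 := exp_le_one_iff.mpr (by nlinarith)
  rw [← compl_Iic, prob_compl_eq_one_sub measurableSet_Iic, ← ofReal_cdf, cdf_expMeasure_eq hr,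
    if_pos ht, ← ENNReal.ofReal_one, ← ENNReal.ofReal_sub _ (sub_nonneg.mpr hle), sub_sub_cancel]

lemma mgf_id_expMeasure {r t : ℝ} (hr : 0 < r) (ht : t < r) :
    mgf id (expMeasure r) t = r / (r - t) := by
  have hdens (x : ℝ) : (gammaPDF 1 r x).toReal • exp (t * id x) =
      (Ici 0).indicator (fun x => r * exp ((t - r) * x)) x := by
    rcases lt_or_ge x 0 with hx | hx
    · simp [gammaPDF_of_neg hx, indicator_of_notMem (notMem_Ici.mpr hx)]
    · change (exponentialPDF r x).toReal • _ = _
      rw [indicator_of_mem (mem_Ici.mpr hx), exponentialPDF_of_nonneg hx,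
        ENNReal.toReal_ofReal (by positivity), smul_eq_mul, id, mul_assoc, ← exp_add]
      ring_nf
  rw [mgf, expMeasure, gammaMeasure, integral_withDensity_eq_integral_toReal_smul
    (show Measurable (gammaPDF 1 r) from (measurable_gammaPDFReal 1 r).ennreal_ofReal)
    (ae_of_all _ fun _ => ENNReal.ofReal_lt_top)]
  simp only [hdens]
  rw [integral_indicator measurableSet_Ici, integral_Ici_eq_integral_Ioi, integral_const_mul,
    integral_exp_mul_Ioi (by linarith), mul_zero, exp_zero, neg_div, ← div_neg, neg_sub,
    mul_one_div]

section MinWithExponential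

variable {Ω : Type*} [MeasurableSpace Ω] {P : Measure Ω} {A D : Ω → ℝ} {ν : ℝ}

lemma measure_lt_min_of_indepFun (hD : Measurable D) (hind : IndepFun A D P)
    (hν : 0 < ν) (hDlaw : P.map D = expMeasure ν) {t : ℝ} (ht : 0 ≤ t) :
    P {ω | t < min (A ω) (D ω)} = P {ω | t < A ω} * ENNReal.ofReal (exp (-(ν * t))) := by
  have hset : {ω | t < min (A ω) (D ω)} = A ⁻¹' Ioi t ∩ D ⁻¹' Ioi t := by
    ext ω; simp
  rw [hset, hind.measure_inter_preimage_eq_mul _ _ measurableSet_Ioi measurableSet_Ioi,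
    ← Measure.map_apply hD measurableSet_Ioi, hDlaw, expMeasure_Ioi hν ht]
  rfl

lemma lintegral_min_of_indepFun (hA : Measurable A) (hD : Measurable D) (hind : IndepFun A D P)
    (hν : 0 < ν) (hDlaw : P.map D = expMeasure ν) (hA0 : 0 ≤ᵐ[P] A) :
    ∫⁻ ω, ENNReal.ofReal (min (A ω) (D ω)) ∂P =
      ∫⁻ ω, ENNReal.ofReal (∫ t in 0..A ω, exp (-(ν * t))) ∂P := by
  have hD0 := ae_nonneg_of_map_eq_expMeasure hD hDlaw
  rw [lintegral_eq_lintegral_meas_lt P (hA0.mp (hD0.mono fun ω h1 h2 => le_min h2 h1))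
    (hA.min hD).aemeasurable, lintegral_comp_eq_lintegral_meas_lt_mul P hA0 hA.aemeasurable
    (fun _ _ => by apply Continuous.intervalIntegrable; fun_prop)
    (ae_of_all _ fun _ => (exp_pos _).le)]
  exact setLIntegral_congr_fun measurableSet_Ioi fun t ht =>
    measure_lt_min_of_indepFun hD hind hν hDlaw (le_of_lt ht)

lemma integral_min_of_indepFun [IsProbabilityMeasure P] (hA : Measurable A) (hD : Measurable D)
    (hind : IndepFun A D P) (hν : 0 < ν) (hDlaw : P.map D = expMeasure ν) (hA0 : 0 ≤ᵐ[P] A) :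
    ∫ ω, min (A ω) (D ω) ∂P = (1 - ∫ ω, exp (-(ν * A ω)) ∂P) / ν := by
  have hD0 := ae_nonneg_of_map_eq_expMeasure hD hDlaw
  have hexp_le : ∀ᵐ ω ∂P, exp (-(ν * A ω)) ≤ 1 :=
    hA0.mono fun ω h => exp_le_one_iff.mpr (neg_nonpos.mpr (mul_nonneg hν.le h))
  have hexp_int : Integrable (fun ω => exp (-(ν * A ω))) P :=
    (integrable_const 1).mono' (by fun_prop) (hexp_le.mono fun ω h => by
      rwa [norm_of_nonneg (exp_pos _).le])
  calc ∫ ω, min (A ω) (D ω) ∂P = ∫ ω, (1 - exp (-(ν * A ω))) / ν ∂P := by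
        rw [integral_eq_lintegral_of_nonneg_ae (hA0.mp (hD0.mono fun ω h1 h2 => le_min h2 h1))
          (hA.min hD).aestronglyMeasurable, lintegral_min_of_indepFun hA hD hind hν hDlaw hA0,
          integral_eq_lintegral_of_nonneg_ae (hexp_le.mono fun ω h => by
            simp only [Pi.zero_apply]; exact div_nonneg (sub_nonneg.mpr h) hν.le) (by fun_prop)]
        simp only [integral_zero_to_exp_neg_mul hν.ne']
    _ = (1 - ∫ ω, exp (-(ν * A ω)) ∂P) / ν := by
        rw [integral_div, integral_sub (integrable_const 1) hexp_int, integral_const, probReal_univ,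
          one_smul]

end MinWithExponential

section FinCons

variable {Ω : Type*} [MeasurableSpace Ω] {P : Measure Ω} {m : ℕ} {D : Ω → ℝ} {B : Fin m → Ω → ℝ}

lemma iIndepFun.of_fin_cons (h : iIndepFun (Fin.cons D B : Fin (m + 1) → Ω → ℝ) P) :
    iIndepFun B P :=
  h.precomp (g := Fin.succ) (Fin.succ_injective m)

lemma iIndepFun.indepFun_finsetSum_of_fin_cons
    (h : iIndepFun (Fin.cons D B : Fin (m + 1) → Ω → ℝ) P) (hD : Measurable D)
    (hB : ∀ l, Measurable (B l)) (S : Finset (Fin m)) :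
    IndepFun (∑ l ∈ S, B l) D P := by
  have hmeas : ∀ j, Measurable ((Fin.cons D B : Fin (m + 1) → Ω → ℝ) j) := Fin.cases hD hB
  have := h.indepFun_finsetSum_of_notMem hmeas (s := S.map (Fin.succEmb m)) (i := 0) (by simp)
  simpa using this

end FinCons

lemma mgf_finsetSum_of_expMeasure {Ω ι : Type*} [MeasurableSpace Ω] {P : Measure Ω}
    {B : ι → Ω → ℝ} {μ : ι → ℝ} (hind : iIndepFun B P) (hB : ∀ l, Measurable (B l))
    (hlaw : ∀ l, P.map (B l) = expMeasure (μ l)) (S : Finset ι) {t : ℝ}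
    (hμ : ∀ l ∈ S, 0 < μ l) (ht : ∀ l ∈ S, t < μ l) :
    mgf (∑ l ∈ S, B l) P t = ∏ l ∈ S, μ l / (μ l - t) := by
  rw [hind.mgf_sum hB]
  refine Finset.prod_congr rfl fun l hl => ?_
  rw [← mgf_id_map (hB l).aemeasurable, hlaw l, mgf_id_expMeasure (hμ l hl) (ht l hl)]

lemma integral_min_mul_finsetSum_of_fin_cons {Ω : Type*} [MeasurableSpace Ω] {P : Measure Ω}
    [IsProbabilityMeasure P] {m : ℕ} {D : Ω → ℝ} {B : Fin m → Ω → ℝ} {ν : ℝ} {μ : Fin m → ℝ}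
    (hind : iIndepFun (Fin.cons D B : Fin (m + 1) → Ω → ℝ) P) (hD : Measurable D)
    (hB : ∀ l, Measurable (B l)) (hDlaw : P.map D = expMeasure ν)
    (hlaw : ∀ l, P.map (B l) = expMeasure (μ l)) (hν : 0 < ν) (hμ : ∀ l, 0 < μ l)
    {c : ℝ} (hc : 0 ≤ c) (S : Finset (Fin m)) :
    ∫ ω, min (c * ∑ l ∈ S, B l ω) (D ω) ∂P = (1 - ∏ l ∈ S, μ l / (μ l + ν * c)) / ν := by
  have hsum0 : 0 ≤ᵐ[P] fun ω => c * ∑ l ∈ S, B l ω := by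
    filter_upwards [ae_all_iff.mpr fun l => ae_nonneg_of_map_eq_expMeasure (hB l) (hlaw l)]
      with ω hω
    exact mul_nonneg hc (Finset.sum_nonneg fun l _ => hω l)
  have hlaplace : ∫ ω, exp (-(ν * (c * ∑ l ∈ S, B l ω))) ∂P = ∏ l ∈ S, μ l / (μ l + ν * c) := by
    have := mgf_finsetSum_of_expMeasure hind.of_fin_cons hB hlaw S (t := -(ν * c))
      (fun l _ => hμ l) (fun l _ => (neg_nonpos.mpr (mul_nonneg hν.le hc)).trans_lt (hμ l))
    simp only [mgf, Finset.sum_apply, sub_neg_eq_add] at this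
    rw [← this]
    congr 1 with ω
    ring_nf
  have hindep : IndepFun (fun ω => c * ∑ l ∈ S, B l ω) D P := by
    simpa [Function.comp_def] using
      (hind.indepFun_finsetSum_of_fin_cons hD hB S).comp (measurable_const_mul c) measurable_id
  rw [integral_min_of_indepFun (by fun_prop) hD hindep hν hDlaw hsum0, hlaplace]

end ProbabilityTheory

open Finset in
lemma Fin.filter_val_lt_add_one {m : ℕ} (i : Fin m) :
    univ.filter (fun l : Fin m => (l : ℕ) < i + 1) =
      insert i (univ.filter fun l : Fin m => (l : ℕ) < i) := by
  ext l
  simp [le_iff_eq_or_lt, Fin.val_inj]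

open Finset in
lemma eq_mul_prod_of_fluid_invariant {n : ℕ} {lam ν c : ℝ} {μ z : Fin (n + 1) → ℝ} (hc : c ≠ 0)
    (hden : ∀ i, μ i + ν * c ≠ 0) (h0 : lam - μ 0 * z 0 / c - ν * z 0 = 0)
    (hi : ∀ i : Fin (n + 1), i ≠ 0 → μ (i - 1) * z (i - 1) / c - μ i * z i / c - ν * z i = 0)
    (i : Fin (n + 1)) :
    z i = lam * c / (μ i + ν * c) *
      ∏ l ∈ univ.filter (fun l : Fin (n + 1) => (l : ℕ) < i), μ l / (μ l + ν * c) := by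
  induction i using Fin.induction with
  | zero =>
    simp only [Fin.val_zero, Nat.not_lt_zero, Finset.filter_false, Finset.prod_empty, mul_one]
    rw [eq_div_iff (hden 0)]
    field_simp at h0
    linarith
  | succ j ih =>
    have hprev : j.succ - 1 = j.castSucc := by
      ext
      rw [Fin.coe_sub_one, if_neg (Fin.succ_ne_zero j)]
      simp
    have hstep := hi j.succ (Fin.succ_ne_zero j)
    rw [hprev] at hstep
    have hz : z j.succ = μ j.castSucc * z j.castSucc / (μ j.succ + ν * c) := by
      rw [eq_div_iff (hden j.succ)]
      field_simp at hstep
      linarith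
    rw [hz, ih, show univ.filter (fun l : Fin (n + 1) => (l : ℕ) < j.succ) = _ from
      Fin.filter_val_lt_add_one j.castSucc, prod_insert (by simp)]
    field_simp

theorem invariant_coordinates_from_norm_general
    {Ω : Type*} [MeasurableSpace Ω] (P : Measure Ω) [IsProbabilityMeasure P]
    (n : ℕ) (lam ν : ℝ) (hν : 0 < ν)
    (μ : Fin (n + 1) → ℝ) (hμ : ∀ i, 0 < μ i)
    (B : Fin (n + 1) → Ω → ℝ) (D : Ω → ℝ)
    (hmB : ∀ l, Measurable (B l)) (hmD : Measurable D)
    (hindep : iIndepFun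
      (Fin.cons D B : Fin (n + 2) → Ω → ℝ) P)
    (hB : ∀ l, Measure.map (B l) P = expMeasure (μ l))
    (hD : Measure.map D P = expMeasure ν)
    (z : Fin (n + 1) → ℝ) (hz : ∀ i, 0 < z i)
    (heq0 : lam - μ 0 * z 0 / (∑ j, z j) - ν * z 0 = 0)
    (heqi : ∀ i : Fin (n + 1), i ≠ 0 →
      μ (i - 1) * z (i - 1) / (∑ j, z j) - μ i * z i / (∑ j, z j) - ν * z i = 0) :
    ∀ i : Fin (n + 1),
      z i =
        lam * (∫ ω,
          min ((∑ j, z j) * ∑ l : Fin (n + 1), if (l : ℕ) < (i : ℕ) + 1 then B l ω else 0)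
            (D ω) ∂P)
        - lam * ∫ ω,
            min ((∑ j, z j) * ∑ l : Fin (n + 1), if (l : ℕ) < (i : ℕ) then B l ω else 0)
              (D ω) ∂P := by
  intro i
  set c := ∑ j, z j
  have hc : 0 < c := Finset.sum_pos (fun j _ => hz j) Finset.univ_nonempty
  have hden : ∀ l, 0 < μ l + ν * c := fun l => by have := hμ l; positivity
  simp only [← Finset.sum_filter]
  rw [integral_min_mul_finsetSum_of_fin_cons hindep hmD hmB hD hB hν hμ hc.le,
    integral_min_mul_finsetSum_of_fin_cons hindep hmD hmB hD hB hν hμ hc.le,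
    Fin.filter_val_lt_add_one, Finset.prod_insert (by simp),
    eq_mul_prod_of_fluid_invariant hc.ne' (fun l => (hden l).ne') heq0 heqi i]
  generalize ∏ l ∈ Finset.univ.filter (fun l : Fin (n + 1) => (l : ℕ) < i), μ l / (μ l + ν * c) = Q
  have hdi : μ i + ν * c ≠ 0 := (hden i).ne'
  have hdiff : 1 - μ i / (μ i + ν * c) * Q - (1 - Q) = ν * (c * Q / (μ i + ν * c)) := by
    field_simp
    ring
  rw [← mul_sub, ← sub_div, hdiff, mul_div_cancel_left₀ _ hν.ne']
  ring

/-- the coordinates of the invariant fluid solution are determined by its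
norm via `z_i* = λ E[min(‖z*‖₁ B_1^i, D)] − λ E[min(‖z*‖₁ B_1^{i-1}, D)]`, where
`B_1^k` is the partial sum of the first `k` service requirements (`B_1^0 = 0`). -/
theorem invariant_coordinates_from_norm
    {Ω : Type*} [MeasurableSpace Ω] (P : Measure Ω) [IsProbabilityMeasure P]
    (n : ℕ) (lam ν : ℝ) (hlam : 0 < lam) (hν : 0 < ν)
    (μ : Fin (n + 1) → ℝ) (hμ : ∀ i, 0 < μ i)
    (hover : 1 < lam * ∑ i, 1 / μ i)
    (B : Fin (n + 1) → Ω → ℝ) (D : Ω → ℝ)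
    (hmB : ∀ l, Measurable (B l)) (hmD : Measurable D)
    (hindep : iIndepFun
      (Fin.cons D B : Fin (n + 2) → Ω → ℝ) P)
    (hB : ∀ l, Measure.map (B l) P = expMeasure (μ l))
    (hD : Measure.map D P = expMeasure ν)
    (z : Fin (n + 1) → ℝ) (hz : ∀ i, 0 < z i)
    (heq0 : lam - μ 0 * z 0 / (∑ j, z j) - ν * z 0 = 0)
    (heqi : ∀ i : Fin (n + 1), i ≠ 0 →
      μ (i - 1) * z (i - 1) / (∑ j, z j) - μ i * z i / (∑ j, z j) - ν * z i = 0) :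
    ∀ i : Fin (n + 1),
      z i =
        lam * (∫ ω,
          min ((∑ j, z j) * ∑ l : Fin (n + 1), if (l : ℕ) < (i : ℕ) + 1 then B l ω else 0)
            (D ω) ∂P)
        - lam * ∫ ω,
            min ((∑ j, z j) * ∑ l : Fin (n + 1), if (l : ℕ) < (i : ℕ) then B l ω else 0)
              (D ω) ∂P :=
  invariant_coordinates_from_norm_general P n lam ν hν μ hμ B D hmB hmD hindep hB hD z hz heq0 heqi
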